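/- arXiv:1312.4397 — 3 statements merged into one kernel-verified Lean document; each statement's English description precedes it below -/
import Mathlib

section
/- Let b be a real number and for integers n ≥ 3 define v_n(3/2,b) = (∑_{k=1}^{n−2} 1/k) + ((3/2)·n+b)/(n(n−1)) − ln n. Then lim_{n→∞} n³·(v_n(3/2,b) − v_{n+1}(3/2,b)) = 2b + 5/6. -/
open Filter Topology

noncomputable def v (a b : ℝ) (n : ℕ) : ℝ :=
  (∑ k ∈ Finset.Icc 1 (n - 2), (1 : ℝ) / k) + (a * n + b) / ((n : ℝ) * ((n : ℝ) - 1))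
    - Real.log n

/-!
With `x = 1/n`, telescoping the harmonic sum turns `n³ (v n - v (n+1))` into a rational function
of `x` that is continuous at `0`, plus the cubic Taylor remainder of `log (1 + x)` divided by `x³`,
which is `O(x)` by the bound `|x|⁴ / (1 - |x|)` on the remainder of the logarithm series.
-/

lemma v_sub_v_succ (a b : ℝ) {n : ℕ} (hn : 2 ≤ n) :
    v a b n - v a b (n + 1) = (a * n + b) / (n * (n - 1)) - 1 / (n - 1)
      - (a * (n + 1) + b) / (n * (n + 1)) + Real.log (1 + 1 / n) := by
  obtain ⟨m, rfl⟩ := Nat.exists_eq_add_of_le' hn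
  have hsum : ∑ k ∈ Finset.Icc 1 (m + 2 + 1 - 2), (1 : ℝ) / k
      = ∑ k ∈ Finset.Icc 1 (m + 2 - 2), (1 : ℝ) / k + 1 / (m + 1) := by
    simp only [Nat.add_sub_cancel, show m + 2 + 1 - 2 = m + 1 by omega]
    rw [Finset.sum_Icc_succ_top (by omega)]
    push_cast
    rfl
  have hlog : Real.log (1 + 1 / (m + 2 : ℕ)) = Real.log (m + 2 + 1 : ℕ) - Real.log (m + 2 : ℕ) := by
    rw [← Real.log_div (by positivity) (by positivity)]
    congr 1
    push_cast
    field_simp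
  simp only [v, hsum, hlog]
  push_cast
  ring

lemma abs_log_one_add_sub_cubic_le {x : ℝ} (hx : |x| < 1) :
    |Real.log (1 + x) - (x - x ^ 2 / 2 + x ^ 3 / 3)| ≤ |x| ^ 4 / (1 - |x|) := by
  have h := Real.abs_log_sub_add_sum_range_le (x := -x) (by rwa [abs_neg]) 3
  simp only [Finset.sum_range_succ, Finset.sum_range_zero, abs_neg, sub_neg_eq_add] at h
  convert h using 2
  push_cast
  ring

lemma tendsto_log_one_add_sub_cubic_div_cube :
    Tendsto (fun x : ℝ => (Real.log (1 + x) - (x - x ^ 2 / 2 + x ^ 3 / 3)) / x ^ 3)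
      (𝓝 0) (𝓝 0) := by
  have hbound : Tendsto (fun x : ℝ => |x| / (1 - |x|)) (𝓝 0) (𝓝 0) := by
    have : ContinuousAt (fun x : ℝ => |x| / (1 - |x|)) 0 := by fun_prop (disch := simp)
    simpa using this.tendsto
  refine squeeze_zero_norm' ?_ hbound
  filter_upwards [eventually_abs_sub_lt 0 one_pos] with x hx
  rw [sub_zero] at hx
  rcases eq_or_ne x 0 with rfl | hx0
  · simp
  rw [Real.norm_eq_abs, abs_div, abs_pow, div_le_iff₀ (by positivity)]
  calc _ ≤ |x| ^ 4 / (1 - |x|) := abs_log_one_add_sub_cubic_le hx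
    _ = |x| / (1 - |x|) * |x| ^ 3 := by ring

lemma cube_mul_v_sub_v_succ_three_halves (b : ℝ) {n : ℕ} (hn : 2 ≤ n) :
    (n : ℝ) ^ 3 * (v (3 / 2) b n - v (3 / 2) b (n + 1))
      = (2 * b + 5 / 6 + (n : ℝ)⁻¹ / 2 - (n : ℝ)⁻¹ ^ 2 / 3) / (1 - (n : ℝ)⁻¹ ^ 2)
        + (Real.log (1 + (n : ℝ)⁻¹) - ((n : ℝ)⁻¹ - (n : ℝ)⁻¹ ^ 2 / 2 + (n : ℝ)⁻¹ ^ 3 / 3))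
          / (n : ℝ)⁻¹ ^ 3 := by
  have hn2 : (2 : ℝ) ≤ n := by exact_mod_cast hn
  have hn1 : (n : ℝ) - 1 ≠ 0 := by linarith
  have hnsq : (n : ℝ) ^ 2 - 1 ≠ 0 := by nlinarith
  rw [v_sub_v_succ _ _ hn, one_div]
  field_simp
  ring

theorem diff_rate_three (b : ℝ) :
    Tendsto (fun n : ℕ => (n : ℝ) ^ 3 * (v (3 / 2) b n - v (3 / 2) b (n + 1))) atTop
      (𝓝 (2 * b + 5 / 6)) := by
  have hrational : ContinuousAt
      (fun x : ℝ => (2 * b + 5 / 6 + x / 2 - x ^ 2 / 3) / (1 - x ^ 2)) 0 := by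
    fun_prop (disch := norm_num)
  have hlim := (hrational.tendsto.add tendsto_log_one_add_sub_cubic_div_cube).comp
    tendsto_inv_atTop_nhds_zero_nat
  simp only [ne_eq, OfNat.ofNat_ne_zero, not_false_eq_true, zero_pow, zero_div, add_zero,
    sub_zero, div_one] at hlim
  refine hlim.congr' ?_
  filter_upwards [eventually_ge_atTop 2] with n hn
  exact (cube_mul_v_sub_v_succ_three_halves b hn).symm
end

section
/- For integers n ≥ 3 define s_n = (∑_{k=1}^{n−2} 1/k) + 13/(12(n−1)) + 5/(12n) − ln n. Then lim_{n→∞} n⁵·(s_n − s_{n+1} − 1/(4n⁴)) = −2/15. -/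
/-!
With `x = 1 / n`, telescoping gives
`s n - s (n + 1) = x / (12 (1 - x)) - 2x / 3 - 5x / (12 (1 + x)) + log (1 + x)`.
Replacing `log (1 + x)` by its Taylor polynomial of degree 6 and subtracting `x⁴ / 4`, the
rational part becomes `x⁵ (-8 + 20x - 12x² + 10x³) / (60 (1 - x²))`, whose cofactor of `x⁵` tends
to `-8/60 = -2/15`; the Taylor remainder is `O(x⁷)`, so it vanishes after division by `x⁵`.
-/

open Filter Topology

noncomputable def s (n : ℕ) : ℝ :=
  (∑ k ∈ Finset.Icc 1 (n - 2), (1 : ℝ) / k) + 13 / (12 * ((n : ℝ) - 1)) + 5 / (12 * n)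
    - Real.log n

open Finset Real

lemma abs_log_one_add_sub_sum_range_le {x : ℝ} (hx : |x| ≤ 1 / 2) (n : ℕ) :
    |log (1 + x) - ∑ i ∈ range n, (-1) ^ i * x ^ (i + 1) / (i + 1)| ≤ 2 * |x| ^ (n + 1) := by
  have key := abs_log_sub_add_sum_range_le (x := -x) (by rw [abs_neg]; linarith) n
  rw [abs_neg, sub_neg_eq_add] at key
  have hsum : ∑ i ∈ range n, (-x) ^ (i + 1) / (i + 1)
      = -∑ i ∈ range n, (-1) ^ i * x ^ (i + 1) / (i + 1) := by
    rw [← sum_neg_distrib]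
    refine sum_congr rfl fun i _ => ?_
    rw [neg_pow, pow_succ]
    ring
  calc _ = |(∑ i ∈ range n, (-x) ^ (i + 1) / (i + 1)) + log (1 + x)| := by
        rw [hsum]; ring_nf
    _ ≤ |x| ^ (n + 1) / (1 - |x|) := key
    _ ≤ |x| ^ (n + 1) / (1 / 2) := by gcongr; linarith
    _ = 2 * |x| ^ (n + 1) := by ring

noncomputable def sDiff (x : ℝ) : ℝ :=
  x / (12 * (1 - x)) - 2 * x / 3 - 5 * x / (12 * (1 + x)) + log (1 + x)

lemma s_sub_s_succ {n : ℕ} (hn : 3 ≤ n) : s n - s (n + 1) = sDiff (n : ℝ)⁻¹ := by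
  have hn' : (3 : ℝ) ≤ n := by exact_mod_cast hn
  have hsum : ∑ k ∈ Icc 1 (n + 1 - 2), (1 : ℝ) / k
      = ∑ k ∈ Icc 1 (n - 2), (1 : ℝ) / k + 1 / ((n : ℝ) - 1) := by
    rw [show n + 1 - 2 = n - 2 + 1 by omega, sum_Icc_succ_top (by omega),
      show n - 2 + 1 = n - 1 by omega, Nat.cast_sub (by omega), Nat.cast_one]
  have hlog : log (1 + (n : ℝ)⁻¹) = log ((n : ℝ) + 1) - log n := by
    rw [← log_div (by positivity) (by positivity), add_div, div_self (by positivity), one_div]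
  simp only [s, sDiff, hsum, hlog]
  push_cast
  rw [add_sub_cancel_right]
  have : (n : ℝ) - 1 ≠ 0 := by linarith
  field_simp
  ring

lemma sDiff_sub_quartic_eq {x : ℝ} (hx : x ^ 2 ≠ 1) :
    sDiff x - x ^ 4 / 4 = x ^ 5 * ((-8 + 20 * x - 12 * x ^ 2 + 10 * x ^ 3) / (60 * (1 - x ^ 2)))
      + (log (1 + x) - ∑ i ∈ range 6, (-1) ^ i * x ^ (i + 1) / (i + 1)) := by
  have h1 : 1 - x ≠ 0 := fun h => hx (by nlinarith)
  have h2 : 1 + x ≠ 0 := fun h => hx (by nlinarith)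
  have h3 : 1 - x ^ 2 ≠ 0 := sub_ne_zero.2 (Ne.symm hx)
  simp only [sDiff, sum_range_succ, sum_range_zero]
  field_simp
  ring

lemma tendsto_sDiff_sub_quartic_div_pow_five :
    Tendsto (fun x => (sDiff x - x ^ 4 / 4) / x ^ 5) (𝓝[≠] 0) (𝓝 (-(2 / 15))) := by
  have hsmall : ∀ᶠ x : ℝ in 𝓝[≠] 0, x ≠ 0 ∧ |x| ≤ 1 / 2 := by
    refine eventually_mem_nhdsWithin.and (eventually_nhdsWithin_of_eventually_nhds ?_)
    exact (continuous_abs.tendsto (0 : ℝ)).eventually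
      (ge_mem_nhds (by norm_num : |(0 : ℝ)| < 1 / 2))
  have hrat : Tendsto (fun x : ℝ => (-8 + 20 * x - 12 * x ^ 2 + 10 * x ^ 3) / (60 * (1 - x ^ 2)))
      (𝓝[≠] 0) (𝓝 (-(2 / 15))) := by
    refine tendsto_nhdsWithin_of_tendsto_nhds ?_
    have hcont : ContinuousAt
        (fun x : ℝ => (-8 + 20 * x - 12 * x ^ 2 + 10 * x ^ 3) / (60 * (1 - x ^ 2))) 0 :=
      ContinuousAt.div (by fun_prop) (by fun_prop) (by norm_num)
    convert hcont.tendsto using 2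
    norm_num
  have hrem : Tendsto
      (fun x => (log (1 + x) - ∑ i ∈ range 6, (-1) ^ i * x ^ (i + 1) / (i + 1)) / x ^ 5)
      (𝓝[≠] 0) (𝓝 0) := by
    refine squeeze_zero_norm' ?_ (?_ : Tendsto (fun x : ℝ => 2 * |x| ^ 2) (𝓝[≠] 0) (𝓝 0))
    · filter_upwards [hsmall] with x ⟨hx0, hx⟩
      rw [Real.norm_eq_abs, abs_div, abs_pow, div_le_iff₀ (pow_pos (abs_pos.2 hx0) 5)]
      calc _ ≤ 2 * |x| ^ (6 + 1) := abs_log_one_add_sub_sum_range_le hx 6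
        _ = 2 * |x| ^ 2 * |x| ^ 5 := by ring
    · refine tendsto_nhdsWithin_of_tendsto_nhds ?_
      simpa using ((continuous_abs.pow 2).const_mul (2 : ℝ)).tendsto (0 : ℝ)
  have hsum := hrat.add hrem
  rw [add_zero] at hsum
  refine hsum.congr' ?_
  filter_upwards [hsmall] with x ⟨hx0, hx⟩
  have hx1 : x ^ 2 ≠ 1 := by
    rw [← sq_abs]
    nlinarith [abs_nonneg x]
  rw [sDiff_sub_quartic_eq hx1, add_div (x ^ 5 * _), mul_div_cancel_left₀ _ (pow_ne_zero 5 hx0)]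

theorem diff_rate_five :
    Tendsto (fun n : ℕ => (n : ℝ) ^ 5 * (s n - s (n + 1) - 1 / (4 * (n : ℝ) ^ 4))) atTop
      (𝓝 (-(2 / 15))) := by
  have hinv : Tendsto (fun n : ℕ => (n : ℝ)⁻¹) atTop (𝓝[≠] 0) :=
    (tendsto_inv_atTop_nhdsGT_zero.comp tendsto_natCast_atTop_atTop).mono_right
      (nhdsWithin_mono _ fun x hx => ne_of_gt hx)
  refine (tendsto_sDiff_sub_quartic_div_pow_five.comp hinv).congr' ?_
  filter_upwards [eventually_ge_atTop 3] with n hn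
  have hn0 : (n : ℝ) ≠ 0 := by positivity
  simp only [Function.comp_apply, ← s_sub_s_succ hn]
  field_simp
end

section
/- For every integer n ≥ 3, the quantity s_n = (∑_{k=1}^{n−2} 1/k) + 13/(12(n−1)) + 5/(12n) − ln n satisfies s_n > γ. -/
open Filter Topology Real

noncomputable def correction (x : ℝ) : ℝ := 1 / (12 * (x - 1)) - 7 / (12 * x)

lemma s_eq_harmonic_sub_log_add_correction {n : ℕ} (hn : 2 ≤ n) :
    s n = harmonic n - log n + correction n := by
  obtain ⟨m, rfl⟩ := Nat.exists_eq_add_of_le' hn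
  have hsum : ∑ k ∈ Finset.Icc 1 m, (1 : ℝ) / k = harmonic m := by
    simp [harmonic_eq_sum_Icc]
  rw [s, correction, Nat.add_sub_cancel, hsum, harmonic_succ, harmonic_succ]
  push_cast
  rw [show (m : ℝ) + 2 - 1 = m + 1 by ring]
  field_simp
  ring

lemma tendsto_correction_atTop : Tendsto correction atTop (𝓝 0) := by
  have h := (tendsto_const_nhds (x := (1 : ℝ))).div_atTop
    ((tendsto_atTop_add_const_right _ (-1) tendsto_id).const_mul_atTop (by norm_num : (0:ℝ) < 12))
  have h' := (tendsto_const_nhds (x := (7 : ℝ))).div_atTop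
    (tendsto_id.const_mul_atTop (by norm_num : (0:ℝ) < 12))
  rw [← sub_zero 0]
  exact (h.sub h').congr fun x => by simp [correction, sub_eq_add_neg]

lemma sum_range_le_log_one_add_inv {a : ℝ} (ha : 0 < a) (N : ℕ) :
    ∑ k ∈ Finset.range N, 2 * (1 / (2 * k + 1)) * (1 / (2 * a + 1)) ^ (2 * k + 1)
      ≤ log (1 + a⁻¹) :=
  sum_le_hasSum _ (fun k _ => by positivity) (hasSum_log_one_add_inv ha)

lemma inv_add_correction_sub_correction_lt_log {x : ℝ} (hx : 1 < x) :
    (x + 1)⁻¹ + correction (x + 1) - correction x < log (1 + x⁻¹) := by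
  refine lt_of_lt_of_le ?_ (sum_range_le_log_one_add_inv (by linarith) 3)
  have h0 : 0 < x := by linarith
  have h1 : 0 < x - 1 := by linarith
  have hpos : 0 < (480 * x ^ 4 + 944 * x ^ 3 + 720 * x ^ 2 + 246 * x + 40) /
      (60 * (2 * x + 1) ^ 5 * x * (x + 1) * (x - 1)) := by positivity
  refine sub_pos.1 (hpos.trans_eq ?_)
  simp only [Finset.sum_range_succ, Finset.sum_range_zero, correction, add_sub_cancel_right]
  push_cast
  field_simp
  ring

lemma s_succ_lt {n : ℕ} (hn : 2 ≤ n) : s (n + 1) < s n := by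
  have hx : (1 : ℝ) < n := by exact_mod_cast hn
  have hlog : log ((n : ℝ) + 1) = log n + log (1 + (n : ℝ)⁻¹) := by
    rw [← log_mul (by positivity) (by positivity)]
    congr 1
    field_simp
  rw [s_eq_harmonic_sub_log_add_correction hn, s_eq_harmonic_sub_log_add_correction (by omega),
    harmonic_succ]
  push_cast
  rw [hlog]
  linarith [inv_add_correction_sub_correction_lt_log hx]

lemma tendsto_s_atTop : Tendsto s atTop (𝓝 eulerMascheroniConstant) := by
  have h := tendsto_harmonic_sub_log.add (tendsto_correction_atTop.comp tendsto_natCast_atTop_atTop)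
  rw [add_zero] at h
  refine h.congr' ?_
  filter_upwards [eventually_ge_atTop 2] with n hn
  exact (s_eq_harmonic_sub_log_add_correction hn).symm

theorem s_gt_gamma (n : ℕ) (hn : 3 ≤ n) : Real.eulerMascheroniConstant < s n := by
  have hanti : StrictAnti fun k => s (k + 2) :=
    strictAnti_nat_of_succ_lt fun k => s_succ_lt (by omega)
  have hlim : Tendsto (fun k => s (k + 2)) atTop (𝓝 eulerMascheroniConstant) :=
    tendsto_s_atTop.comp (tendsto_add_atTop_nat 2)
  obtain ⟨k, rfl⟩ := Nat.exists_eq_add_of_le' (by omega : 2 ≤ n)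
  exact (hanti.antitone.le_of_tendsto hlim (k + 1)).trans_lt (hanti (Nat.lt_succ_self k))
end
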